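/- For two sequences of closed balls U = (u_1,…,u_n) and W = (w_1,…,w_m) in ℝ^d, the quantity F₁^max(U,W) = sup over realizations A of U and B of W of F_c(A,B) satisfies the recurrence F₁^max restricted to prefixes: F(i+1,k) = min_{1 ≤ j ≤ k} max(F(i,j), D(i+1,j,k)) for i ≥ 1, with F(1,k) = D(1,1,k), where D(i,j,k) = max_{p ∈ u_i} min_{j ≤ x ≤ k} max_{q ∈ w_x} d(p,q); i.e., the value defined by this recurrence at (n,m), minimized over the last index, equals F₁^max(U,W). -/

import Mathlib

open Metric

noncomputable section

/-- Points in `ℝ^k`. -/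
abbrev Pt (k : ℕ) := EuclideanSpace ℝ (Fin k)

/-- One step in the discrete Fréchet coupling: advance in `A`, in `B`, or both. -/
def dfStep {n m : ℕ} (p q : Fin (n+1) × Fin (m+1)) : Prop :=
  ((q.1 : ℕ) = (p.1 : ℕ) + 1 ∧ q.2 = p.2) ∨
  (q.1 = p.1 ∧ (q.2 : ℕ) = (p.2 : ℕ) + 1) ∨
  ((q.1 : ℕ) = (p.1 : ℕ) + 1 ∧ (q.2 : ℕ) = (p.2 : ℕ) + 1)

/-- `(a_n, b_m)` is reachable from `(a_1, b_1)` in the graph `G_δ`. -/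
def dfReach {k n m : ℕ} (a : Fin (n+1) → Pt k) (b : Fin (m+1) → Pt k) (δ : ℝ) : Prop :=
  dist (a 0) (b 0) ≤ δ ∧ dist (a (Fin.last n)) (b (Fin.last m)) ≤ δ ∧
  Relation.ReflTransGen
    (fun p q => dfStep p q ∧ dist (a p.1) (b p.2) ≤ δ ∧ dist (a q.1) (b q.2) ≤ δ)
    (0, 0) (Fin.last n, Fin.last m)

/-- The discrete Fréchet distance. -/
def dF {k n m : ℕ} (a : Fin (n+1) → Pt k) (b : Fin (m+1) → Pt k) : ℝ :=
  sInf {δ : ℝ | 0 < δ ∧ dfReach a b δ}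

/-- One-sided discrete Fréchet distance with shortcuts on side `B`:
the minimum of `dF A B'` over nonempty subsequences `B'` of `B`. -/
def Fc {k n m : ℕ} (a : Fin (n+1) → Pt k) (b : Fin (m+1) → Pt k) : ℝ :=
  sInf {v : ℝ | ∃ (l : ℕ) (f : Fin (l+1) → Fin (m+1)), StrictMono f ∧ v = dF a (b ∘ f)}

/-- `max_{q ∈ D(c,r)} d(p, q)`. -/
def ballDmax {d : ℕ} (p c : Pt d) (r : ℝ) : ℝ := sSup ((dist p ·) '' closedBall c r)

/-!
Shortcuts on `B` make `F_c(A, B)` the least bottleneck cost `max_i d(a_i, b_{σ i})` over monotone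
maps `σ`: a monotone map factors as a subsequence of `B` followed by a monotone surjection, and
a monotone surjection is a Fréchet coupling.

Given realizations, following the minimizing indices of the recurrence builds a monotone `σ` of
cost at most `F(n, k)`, since `D(i, j, k)` dominates `d(a_i, b_x)` for some `x ∈ [j, k]`.

Conversely let `c = min_k F(n, k)` and let `h_i` be the least column `k` with `F(i, k) < c`
(`m + 1` if there is none). Then `h` is monotone, `h_n = m + 1`, and the recurrence forces
`c ≤ D(i, h_{i-1}, k)` for `h_{i-1} ≤ k < h_i` (with `h_{-1} = 0`). The adversary puts `a_i`
where every `x` of the interval `[h_{i-1}, h_i)` has far distance `> c - ε`, and `b_x` at the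
point of `w_x` farthest from `a_i` for the row `i` whose interval contains `x`. Every monotone
`σ` meets its own interval in some row, and there the cost exceeds `c - ε`.
-/

section Coupling

variable {X : Type*} [PseudoMetricSpace X] {n m : ℕ}

def matchCost (a : Fin (n+1) → X) (b : Fin (m+1) → X) (σ : Fin (n+1) → Fin (m+1)) : ℝ :=
  Finset.univ.sup' Finset.univ_nonempty fun i => dist (a i) (b (σ i))

lemma matchCost_le_iff {a : Fin (n+1) → X} {b : Fin (m+1) → X} {σ : Fin (n+1) → Fin (m+1)}
    {δ : ℝ} : matchCost a b σ ≤ δ ↔ ∀ i, dist (a i) (b (σ i)) ≤ δ := by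
  simp [matchCost]

lemma dist_le_matchCost (a : Fin (n+1) → X) (b : Fin (m+1) → X) (σ : Fin (n+1) → Fin (m+1))
    (i : Fin (n+1)) : dist (a i) (b (σ i)) ≤ matchCost a b σ :=
  matchCost_le_iff.1 le_rfl i

end Coupling

lemma Monotone.ite_lt {α β : Type*} [LinearOrder α] [Preorder β] {σ : α → β} (hσ : Monotone σ)
    {u : α} {c : β} (hc : ∀ i < u, σ i ≤ c) : Monotone fun i => if i < u then σ i else c := by
  intro x y hxy
  by_cases hy : y < u
  · simp only [hxy.trans_lt hy, hy, if_true]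
    exact hσ hxy
  · by_cases hx : x < u
    · simp only [hx, hy, if_true, if_false]
      exact hc x hx
    · simp only [hx, hy, if_false, le_refl]

section Frechet

variable {k n m : ℕ}

lemma dfStep.fst_le_succ_and_snd_le {p q : Fin (n+1) × Fin (m+1)} (h : dfStep p q) :
    (q.1 : ℕ) ≤ p.1 + 1 ∧ p.2 ≤ q.2 := by
  rw [Fin.le_def]
  rcases h with ⟨h1, h2⟩ | ⟨h1, h2⟩ | ⟨h1, h2⟩
  · rw [h2]; omega
  · rw [h1]; omega
  · omega

lemma reflTransGen_of_dfStep {R : Fin (n+1) × Fin (m+1) → Fin (n+1) × Fin (m+1) → Prop}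
    (hR : ∀ p q, dfStep p q → R p q) (u : Fin (n+1)) (v : Fin (m+1)) :
    Relation.ReflTransGen R (0, 0) (u, v) := by
  induction v using Fin.induction with
  | zero =>
    induction u using Fin.induction with
    | zero => exact .refl
    | succ i ih => exact ih.tail (hR _ _ (Or.inl ⟨by simp, rfl⟩))
  | succ j ih => exact ih.tail (hR _ _ (Or.inr (Or.inl ⟨rfl, by simp⟩)))

lemma exists_pos_dfReach (a : Fin (n+1) → Pt k) (b : Fin (m+1) → Pt k) :
    ∃ δ, 0 < δ ∧ dfReach a b δ := by
  obtain ⟨M, hM⟩ :=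
    (Set.finite_range fun p : Fin (n+1) × Fin (m+1) => dist (a p.1) (b p.2)).bddAbove
  have hδ : ∀ i j, dist (a i) (b j) ≤ max M 1 :=
    fun i j => (hM ⟨(i, j), rfl⟩).trans (le_max_left _ _)
  exact ⟨max M 1, lt_max_of_lt_right one_pos, hδ _ _, hδ _ _,
    reflTransGen_of_dfStep (fun _ _ h => ⟨h, hδ _ _, hδ _ _⟩) _ _⟩

lemma exists_monotone_of_dfReach {a : Fin (n+1) → Pt k} {b : Fin (m+1) → Pt k} {δ : ℝ}
    (h : dfReach a b δ) :
    ∃ σ : Fin (n+1) → Fin (m+1), Monotone σ ∧ ∀ i, dist (a i) (b (σ i)) ≤ δ := by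
  obtain ⟨h0, -, hpath⟩ := h
  suffices ∀ q, Relation.ReflTransGen
      (fun p q => dfStep p q ∧ dist (a p.1) (b p.2) ≤ δ ∧ dist (a q.1) (b q.2) ≤ δ) (0, 0) q →
      ∃ σ : Fin (n+1) → Fin (m+1), Monotone σ ∧ σ q.1 = q.2 ∧
        ∀ i ≤ q.1, dist (a i) (b (σ i)) ≤ δ by
    obtain ⟨σ, hσ, -, hdist⟩ := this _ hpath
    exact ⟨σ, hσ, fun i => hdist i (Fin.le_last i)⟩
  intro q hq
  induction hq with
  | refl => exact ⟨fun _ => 0, monotone_const, rfl, fun i hi => by rwa [Fin.le_zero_iff.1 hi]⟩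
  | @tail p q _ hpq ih =>
    obtain ⟨σ, hσ, hσp, hdist⟩ := ih
    obtain ⟨hstep, -, hq⟩ := hpq
    obtain ⟨h1, h2⟩ := hstep.fst_le_succ_and_snd_le
    have hle : ∀ i < q.1, i ≤ p.1 := fun i hi => Fin.le_def.2 (by have := Fin.lt_def.1 hi; omega)
    refine ⟨fun i => if i < q.1 then σ i else q.2,
      hσ.ite_lt fun i hi => (hσ (hle i hi)).trans (hσp ▸ h2), by simp, fun i hi => ?_⟩
    rcases hi.lt_or_eq with hi | rfl
    · simpa [hi] using hdist i (hle i hi)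
    · simpa using hq

lemma dfReach_of_monotone_surjective {a : Fin (n+1) → Pt k} {b : Fin (m+1) → Pt k} {δ : ℝ}
    {τ : Fin (n+1) → Fin (m+1)} (hτ : Monotone τ) (hsurj : Function.Surjective τ)
    (hdist : ∀ i, dist (a i) (b (τ i)) ≤ δ) : dfReach a b δ := by
  have h0 : τ 0 = 0 := by
    obtain ⟨i, hi⟩ := hsurj 0
    exact le_antisymm (hi ▸ hτ (Fin.zero_le i)) (Fin.zero_le _)
  have hlast : τ (Fin.last n) = Fin.last m := by
    obtain ⟨i, hi⟩ := hsurj (Fin.last m)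
    exact le_antisymm (Fin.le_last _) (hi ▸ hτ (Fin.le_last i))
  have hstep : ∀ i : Fin n, (τ i.succ : ℕ) ≤ τ i.castSucc + 1 := by
    intro i
    by_contra! h
    obtain ⟨j, hj⟩ := hsurj ⟨τ i.castSucc + 1, by omega⟩
    rcases le_or_gt j i.castSucc with hji | hji
    · have := Fin.le_def.1 (hτ hji)
      simp only [hj] at this
      omega
    · have := Fin.le_def.1 (hτ (Fin.castSucc_lt_iff_succ_le.1 hji))
      simp only [hj] at this
      omega
  have hpath : ∀ u, Relation.ReflTransGen
      (fun p q => dfStep p q ∧ dist (a p.1) (b p.2) ≤ δ ∧ dist (a q.1) (b q.2) ≤ δ)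
      (0, 0) (u, τ u) := by
    intro u
    induction u using Fin.induction with
    | zero => rw [h0]
    | succ i ih =>
      refine ih.tail ⟨?_, hdist _, hdist _⟩
      have hmono := Fin.le_def.1 (hτ (Fin.castSucc_le_succ i))
      rcases (hstep i).lt_or_eq with h | h
      · exact Or.inl ⟨by simp, Fin.ext (by dsimp only; omega)⟩
      · exact Or.inr (Or.inr ⟨by simp, h⟩)
  exact ⟨by simpa [h0] using hdist 0, by simpa [hlast] using hdist (Fin.last n),
    by simpa [hlast] using hpath (Fin.last n)⟩

lemma dF_nonneg (a : Fin (n+1) → Pt k) (b : Fin (m+1) → Pt k) : 0 ≤ dF a b :=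
  Real.sInf_nonneg fun _ h => h.1.le

lemma dF_le_matchCost {a : Fin (n+1) → Pt k} {b : Fin (m+1) → Pt k}
    {τ : Fin (n+1) → Fin (m+1)} (hτ : Monotone τ) (hsurj : Function.Surjective τ) :
    dF a b ≤ matchCost a b τ := by
  refine le_of_forall_gt_imp_ge_of_dense fun δ hδ => csInf_le ⟨0, fun _ h => h.1.le⟩ ⟨?_, ?_⟩
  · exact (dist_nonneg.trans (dist_le_matchCost a b τ 0)).trans_lt hδ
  · exact dfReach_of_monotone_surjective hτ hsurj fun i => (dist_le_matchCost a b τ i).trans hδ.le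

lemma Monotone.exists_strictMono_comp_surjective {σ : Fin (n+1) → Fin (m+1)}
    (hσ : Monotone σ) : ∃ (l : ℕ) (f : Fin (l+1) → Fin (m+1)) (τ : Fin (n+1) → Fin (l+1)),
      StrictMono f ∧ Monotone τ ∧ Function.Surjective τ ∧ σ = f ∘ τ := by
  classical
  set s := Finset.univ.image σ
  obtain ⟨l, hl⟩ : ∃ l, s.card = l + 1 :=
    Nat.exists_eq_succ_of_ne_zero (Finset.card_ne_zero.2 (Finset.univ_nonempty.image σ))
  set e := s.orderIsoOfFin hl
  have hmem : ∀ i, σ i ∈ s := fun i => Finset.mem_image_of_mem σ (Finset.mem_univ i)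
  refine ⟨l, fun t => e t, fun i => e.symm ⟨σ i, hmem i⟩,
    (Subtype.strictMono_coe _).comp e.strictMono,
    fun i j hij => e.symm.monotone (Subtype.mk_le_mk.2 (hσ hij)), fun t => ?_,
    funext fun i => by simp⟩
  obtain ⟨i, -, hi⟩ := Finset.mem_image.1 (e t).2
  exact ⟨i, by simp [hi]⟩

lemma Fc_le_matchCost (a : Fin (n+1) → Pt k) (b : Fin (m+1) → Pt k)
    {σ : Fin (n+1) → Fin (m+1)} (hσ : Monotone σ) : Fc a b ≤ matchCost a b σ := by
  obtain ⟨l, f, τ, hf, hτ, hsurj, rfl⟩ := hσ.exists_strictMono_comp_surjective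
  calc Fc a b ≤ dF a (b ∘ f) :=
        csInf_le ⟨0, by rintro _ ⟨_, _, _, rfl⟩; exact dF_nonneg _ _⟩ ⟨l, f, hf, rfl⟩
    _ ≤ matchCost a (b ∘ f) τ := dF_le_matchCost hτ hsurj

lemma exists_matchCost_le_Fc (a : Fin (n+1) → Pt k) (b : Fin (m+1) → Pt k) :
    ∃ σ : Fin (n+1) → Fin (m+1), Monotone σ ∧ matchCost a b σ ≤ Fc a b := by
  classical
  obtain ⟨σ, hσ, hmin⟩ := Finset.exists_min_image
    (Finset.univ.filter (Monotone : (Fin (n+1) → Fin (m+1)) → Prop)) (matchCost a b)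
    ⟨fun _ => 0, by simp [monotone_const]⟩
  rw [Finset.mem_filter] at hσ
  refine ⟨σ, hσ.2, le_csInf ⟨_, m, id, strictMono_id, rfl⟩ ?_⟩
  rintro _ ⟨l, f, hf, rfl⟩
  refine le_csInf (exists_pos_dfReach a (b ∘ f)) fun δ ⟨_, hreach⟩ => ?_
  obtain ⟨σ', hσ', hdist⟩ := exists_monotone_of_dfReach hreach
  exact (hmin (f ∘ σ') (by simp [hf.monotone.comp hσ'])).trans (matchCost_le_iff.2 hdist)

end Frechet

section FiniteMin

variable {ι : Type*} [Finite ι] {P : ι → Prop} (g : ι → ℝ)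

lemma finite_setOf_exists_and_eq : {v | ∃ i, P i ∧ v = g i}.Finite :=
  (Set.finite_range g).subset (by rintro _ ⟨i, -, rfl⟩; exact ⟨i, rfl⟩)

lemma csInf_le_of_finite {i : ι} (hi : P i) : sInf {v | ∃ i, P i ∧ v = g i} ≤ g i :=
  csInf_le (finite_setOf_exists_and_eq g).bddBelow ⟨i, hi, rfl⟩

lemma exists_csInf_eq_of_finite (h : ∃ i, P i) :
    ∃ i, P i ∧ sInf {v | ∃ i, P i ∧ v = g i} = g i := by
  obtain ⟨i, hi⟩ := h
  exact Set.Nonempty.csInf_mem (s := {v | ∃ i, P i ∧ v = g i}) ⟨g i, i, hi, rfl⟩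
    (finite_setOf_exists_and_eq g)

end FiniteMin

section Ball

variable {d : ℕ} {p c q : Pt d} {r : ℝ}

lemma dist_le_dist_add_of_mem_closedBall (hq : q ∈ closedBall c r) : dist p q ≤ dist p c + r :=
  (dist_triangle p c q).trans ((add_le_add_iff_left _).2 (mem_closedBall'.1 hq))

lemma dist_le_ballDmax (hq : q ∈ closedBall c r) : dist p q ≤ ballDmax p c r :=
  le_csSup ⟨dist p c + r, by rintro _ ⟨x, hx, rfl⟩; exact dist_le_dist_add_of_mem_closedBall hx⟩
    ⟨q, hq, rfl⟩

lemma exists_dist_eq_ballDmax (hr : 0 ≤ r) : ∃ q ∈ closedBall c r, dist p q = ballDmax p c r := by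
  obtain ⟨q, hq, hmax⟩ := (isCompact_closedBall c r).exists_isMaxOn (nonempty_closedBall.2 hr)
    (continuous_const.dist continuous_id).continuousOn
  refine ⟨q, hq, le_antisymm (dist_le_ballDmax hq) (csSup_le ⟨_, q, hq, rfl⟩ ?_)⟩
  rintro _ ⟨x, hx, rfl⟩
  exact hmax hx

lemma ballDmax_le (hr : 0 ≤ r) : ballDmax p c r ≤ dist p c + r := by
  obtain ⟨q, hq, hpq⟩ := exists_dist_eq_ballDmax (p := p) hr
  exact hpq ▸ dist_le_dist_add_of_mem_closedBall hq

end Ball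

section FarDist

variable {d m : ℕ} (cw : Fin (m+1) → Pt d) (rw : Fin (m+1) → ℝ)

def minFarDist (p : Pt d) (j k : Fin (m+1)) : ℝ :=
  sInf {v : ℝ | ∃ x : Fin (m+1), j ≤ x ∧ x ≤ k ∧ v = ballDmax p (cw x) (rw x)}

/-- The paper's `D(i, j, k)` for the ball `u_i = closedBall C R`. -/
def maxMinFarDist (C : Pt d) (R : ℝ) (j k : Fin (m+1)) : ℝ :=
  sSup ((fun p => minFarDist cw rw p j k) '' closedBall C R)

variable {cw rw} {p C : Pt d} {R : ℝ} {j k x : Fin (m+1)}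

lemma minFarDist_le (hjx : j ≤ x) (hxk : x ≤ k) :
    minFarDist cw rw p j k ≤ ballDmax p (cw x) (rw x) := by
  rw [minFarDist]
  simpa only [and_assoc] using
    csInf_le_of_finite (P := fun x => j ≤ x ∧ x ≤ k) (fun x => ballDmax p (cw x) (rw x)) ⟨hjx, hxk⟩

lemma exists_minFarDist_eq (hjk : j ≤ k) :
    ∃ x, j ≤ x ∧ x ≤ k ∧ minFarDist cw rw p j k = ballDmax p (cw x) (rw x) := by
  rw [minFarDist]
  simpa only [and_assoc] using exists_csInf_eq_of_finite (P := fun x => j ≤ x ∧ x ≤ k)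
    (fun x => ballDmax p (cw x) (rw x)) ⟨j, le_rfl, hjk⟩

lemma minFarDist_le_maxMinFarDist (hrw : ∀ x, 0 ≤ rw x) (hjk : j ≤ k) (hp : p ∈ closedBall C R) :
    minFarDist cw rw p j k ≤ maxMinFarDist cw rw C R j k := by
  refine le_csSup ⟨R + dist C (cw j) + rw j, ?_⟩ ⟨p, hp, rfl⟩
  rintro _ ⟨p', hp', rfl⟩
  calc minFarDist cw rw p' j k ≤ ballDmax p' (cw j) (rw j) := minFarDist_le le_rfl hjk
    _ ≤ dist p' (cw j) + rw j := ballDmax_le (hrw j)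
    _ ≤ R + dist C (cw j) + rw j := by
      linarith [dist_le_dist_add_of_mem_closedBall (p := cw j) hp', dist_comm p' (cw j),
        dist_comm C (cw j)]

lemma exists_dist_le_maxMinFarDist {b : Fin (m+1) → Pt d}
    (hb : ∀ x, b x ∈ closedBall (cw x) (rw x)) (hjk : j ≤ k) (hp : p ∈ closedBall C R) :
    ∃ x, j ≤ x ∧ x ≤ k ∧ dist p (b x) ≤ maxMinFarDist cw rw C R j k := by
  obtain ⟨x, hjx, hxk, hx⟩ := exists_minFarDist_eq (cw := cw) (rw := rw) (p := p) hjk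
  refine ⟨x, hjx, hxk, ?_⟩
  calc dist p (b x) ≤ ballDmax p (cw x) (rw x) := dist_le_ballDmax (hb x)
    _ = minFarDist cw rw p j k := hx.symm
    _ ≤ maxMinFarDist cw rw C R j k :=
      minFarDist_le_maxMinFarDist (fun x => dist_nonneg.trans (hb x)) hjk hp

lemma exists_mem_closedBall_lt_ballDmax {c ε : ℝ} (hR : 0 ≤ R)
    (hc : c ≤ maxMinFarDist cw rw C R j k) (hε : 0 < ε) :
    ∃ p ∈ closedBall C R, ∀ x, j ≤ x → x ≤ k → c - ε < ballDmax p (cw x) (rw x) := by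
  obtain ⟨_, ⟨p, hp, rfl⟩, hlt⟩ := exists_lt_of_lt_csSup
    ((nonempty_closedBall.2 hR).image _) ((sub_lt_self c hε).trans_le hc)
  exact ⟨p, hp, fun x hjx hxk => hlt.trans_le (minFarDist_le hjx hxk)⟩

lemma exists_mem_closedBall_lt_ballDmax_of_Ico {c ε : ℝ} {lo hi : ℕ} (hR : 0 ≤ R)
    (hc : ∀ j k : Fin (m+1), (j : ℕ) = lo → j ≤ k → (k : ℕ) < hi →
      c ≤ maxMinFarDist cw rw C R j k) (hε : 0 < ε) :
    ∃ p ∈ closedBall C R, ∀ x : Fin (m+1), lo ≤ x → (x : ℕ) < hi →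
      c - ε < ballDmax p (cw x) (rw x) := by
  by_cases hne : ∃ x : Fin (m+1), lo ≤ x ∧ (x : ℕ) < hi
  · obtain ⟨x, hlo, hhi⟩ := hne
    have hx := x.isLt
    obtain ⟨p, hp, hfar⟩ := exists_mem_closedBall_lt_ballDmax (j := ⟨lo, by omega⟩)
      (k := ⟨min (hi - 1) m, by omega⟩) hR
      (hc _ _ rfl (Fin.le_def.2 (by dsimp only; omega)) (by dsimp only; omega)) hε
    exact ⟨p, hp, fun y hlo' hhi' =>
      hfar y (Fin.le_def.2 hlo') (Fin.le_def.2 (by have := y.isLt; dsimp only; omega))⟩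
  · exact ⟨C, mem_closedBall_self hR, fun x hlo hhi => (hne ⟨x, hlo, hhi⟩).elim⟩

end FarDist

section Frontier

variable {n m : ℕ}

/-- The least column `k` with `f k < c`, or `m + 1` if there is none. -/
def lowestBelow (f : Fin (m+1) → ℝ) (c : ℝ) : ℕ :=
  Nat.find (⟨m + 1, Or.inl le_rfl⟩ : ∃ k, m + 1 ≤ k ∨ ∃ x : Fin (m+1), f x < c ∧ (x : ℕ) = k)

variable {f g : Fin (m+1) → ℝ} {c : ℝ} {k : Fin (m+1)}

lemma lowestBelow_le_succ (f : Fin (m+1) → ℝ) (c : ℝ) : lowestBelow f c ≤ m + 1 :=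
  Nat.find_min' _ (Or.inl le_rfl)

lemma lowestBelow_le (h : f k < c) : lowestBelow f c ≤ k :=
  Nat.find_min' _ (Or.inr ⟨k, h, rfl⟩)

lemma apply_lt_of_lowestBelow_eq (h : lowestBelow f c = k) : f k < c := by
  rcases Nat.find_spec (⟨m + 1, Or.inl le_rfl⟩ :
      ∃ k, m + 1 ≤ k ∨ ∃ x : Fin (m+1), f x < c ∧ (x : ℕ) = k) with hm | ⟨x, hx, hxk⟩
  · have := k.isLt
    rw [← lowestBelow] at hm
    omega
  · rwa [← Fin.ext (hxk.trans h)]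

lemma le_apply_of_lt_lowestBelow (h : (k : ℕ) < lowestBelow f c) : c ≤ f k :=
  not_lt.1 fun hk => (lowestBelow_le hk).not_gt h

lemma lt_lowestBelow_of_forall_le (h : ∀ k, c ≤ f k) : m < lowestBelow f c := by
  by_contra! hle
  exact (h _).not_gt (apply_lt_of_lowestBelow_eq (k := ⟨_, Nat.lt_succ_of_le hle⟩) rfl)

lemma lowestBelow_mono (h : ∀ k, g k < c → ∃ j ≤ k, f j < c) :
    lowestBelow f c ≤ lowestBelow g c := by
  by_cases hg : lowestBelow g c ≤ m
  · obtain ⟨j, hjk, hj⟩ := h ⟨_, Nat.lt_succ_of_le hg⟩ (apply_lt_of_lowestBelow_eq rfl)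
    exact (lowestBelow_le hj).trans (Fin.le_def.1 hjk)
  · exact (lowestBelow_le_succ f c).trans (by omega)

/-- Row `i` owns the columns `[prevEnd hi i, hi i)`. -/
def prevEnd (hi : Fin (n+1) → ℕ) : Fin (n+1) → ℕ :=
  Fin.cons 0 fun i : Fin n => hi i.castSucc

variable {hi : Fin (n+1) → ℕ}

@[simp] lemma prevEnd_zero : prevEnd hi 0 = 0 := rfl

@[simp] lemma prevEnd_succ (i : Fin n) : prevEnd hi i.succ = hi i.castSucc := Fin.cons_succ _ _ _

lemma le_prevEnd_of_lt (hmono : Monotone hi) {i i' : Fin (n+1)} (h : i < i') :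
    hi i ≤ prevEnd hi i' := by
  obtain ⟨i', rfl⟩ := Fin.exists_succ_eq.2 (Fin.ne_zero_of_lt h)
  simpa using hmono (Fin.le_castSucc_iff.2 h)

lemma eq_of_mem_prevEnd_Ico (hmono : Monotone hi) {i i' : Fin (n+1)} {x : ℕ}
    (h₁ : prevEnd hi i ≤ x) (h₂ : x < hi i) (h₁' : prevEnd hi i' ≤ x) (h₂' : x < hi i') :
    i = i' := by
  rcases lt_trichotomy i i' with h | h | h
  · have := le_prevEnd_of_lt hmono h; omega
  · exact h
  · have := le_prevEnd_of_lt hmono h; omega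

lemma exists_prevEnd_le_lt (hlast : m < hi (Fin.last n)) {σ : Fin (n+1) → Fin (m+1)}
    (hσ : Monotone σ) : ∃ i, prevEnd hi i ≤ σ i ∧ (σ i : ℕ) < hi i := by
  by_contra! h
  have key : ∀ i, hi i ≤ σ i := by
    intro i
    induction i using Fin.induction with
    | zero => exact h 0 (by simp)
    | succ i ih => exact h _ (by simpa using ih.trans (Fin.le_def.1 (hσ (Fin.castSucc_le_succ i))))
  have := (σ (Fin.last n)).isLt
  have := key (Fin.last n)
  omega

end Frontier

section Recurrence

variable {n m : ℕ}

def IsMinMaxRecurrence (D : Fin (n+1) → Fin (m+1) → Fin (m+1) → ℝ)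
    (F : Fin (n+1) → Fin (m+1) → ℝ) : Prop :=
  (∀ k, F 0 k = D 0 0 k) ∧ ∀ (i : Fin n) (k : Fin (m+1)),
    F i.succ k = sInf {v : ℝ | ∃ j : Fin (m+1), j ≤ k ∧ v = max (F i.castSucc j) (D i.succ j k)}

variable {D : Fin (n+1) → Fin (m+1) → Fin (m+1) → ℝ} {F : Fin (n+1) → Fin (m+1) → ℝ}

namespace IsMinMaxRecurrence

lemma exists_eq_max (hF : IsMinMaxRecurrence D F) (i : Fin n) (k : Fin (m+1)) :
    ∃ j ≤ k, F i.succ k = max (F i.castSucc j) (D i.succ j k) := by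
  rw [hF.2]
  exact exists_csInf_eq_of_finite _ ⟨k, le_rfl⟩

lemma le_max (hF : IsMinMaxRecurrence D F) (i : Fin n) {j k : Fin (m+1)} (hjk : j ≤ k) :
    F i.succ k ≤ max (F i.castSucc j) (D i.succ j k) :=
  (hF.2 i k).trans_le (csInf_le_of_finite _ hjk)

lemma exists_monotone_le {e : Fin (n+1) → Fin (m+1) → ℝ} (hF : IsMinMaxRecurrence D F)
    (he : ∀ i j k, j ≤ k → ∃ x, j ≤ x ∧ x ≤ k ∧ e i x ≤ D i j k) (i : Fin (n+1))
    (k : Fin (m+1)) :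
    ∃ σ : Fin (n+1) → Fin (m+1), Monotone σ ∧ σ i ≤ k ∧ ∀ t ≤ i, e t (σ t) ≤ F i k := by
  induction i using Fin.induction generalizing k with
  | zero =>
    obtain ⟨x, -, hxk, hx⟩ := he 0 0 k (Fin.zero_le k)
    refine ⟨fun _ => x, monotone_const, hxk, fun t ht => ?_⟩
    rw [Fin.le_zero_iff.1 ht, hF.1]
    exact hx
  | succ i ih =>
    obtain ⟨j, hjk, hFk⟩ := hF.exists_eq_max i k
    obtain ⟨σ, hσ, hσj, hσle⟩ := ih j
    obtain ⟨x, hjx, hxk, hx⟩ := he i.succ j k hjk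
    refine ⟨fun t => if t < i.succ then σ t else x,
      hσ.ite_lt fun t ht => (hσ (Fin.le_castSucc_iff.2 ht)).trans (hσj.trans hjx),
      by simpa using hxk, fun t ht => ?_⟩
    rw [hFk]
    rcases ht.lt_or_eq with ht | rfl
    · simpa [ht] using (hσle t (Fin.le_castSucc_iff.2 ht)).trans (le_max_left _ _)
    · simpa using hx.trans (le_max_right _ _)

lemma monotone_lowestBelow (hF : IsMinMaxRecurrence D F) (c : ℝ) :
    Monotone fun i => lowestBelow (F i) c :=
  Fin.monotone_iff_le_succ.2 fun i => lowestBelow_mono fun k hk => by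
    obtain ⟨j, hjk, hj⟩ := hF.exists_eq_max i k
    exact ⟨j, hjk, (le_max_left _ _).trans_lt (hj ▸ hk)⟩

lemma le_of_mem_prevEnd_Ico (hF : IsMinMaxRecurrence D F) {c : ℝ} {i : Fin (n+1)}
    {j k : Fin (m+1)} (hj : (j : ℕ) = prevEnd (fun i => lowestBelow (F i) c) i) (hjk : j ≤ k)
    (hk : (k : ℕ) < lowestBelow (F i) c) : c ≤ D i j k := by
  have hck : c ≤ F i k := le_apply_of_lt_lowestBelow hk
  cases i using Fin.cases with
  | zero =>
    obtain rfl : j = 0 := Fin.ext (by simpa using hj)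
    rwa [← hF.1]
  | succ i =>
    have hFj : F i.castSucc j < c := apply_lt_of_lowestBelow_eq (by simpa using hj.symm)
    exact (le_max_iff.1 (hck.trans (hF.le_max i hjk))).resolve_left hFj.not_ge

end IsMinMaxRecurrence

end Recurrence

section Realization

variable {d n m : ℕ} {cu : Fin (n+1) → Pt d} {ru : Fin (n+1) → ℝ}
  {cw : Fin (m+1) → Pt d} {rw : Fin (m+1) → ℝ} {F : Fin (n+1) → Fin (m+1) → ℝ}

lemma Fc_le_of_isMinMaxRecurrence
    (hF : IsMinMaxRecurrence (fun i j k => maxMinFarDist cw rw (cu i) (ru i) j k) F)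
    {a : Fin (n+1) → Pt d} {b : Fin (m+1) → Pt d} (ha : ∀ i, a i ∈ closedBall (cu i) (ru i))
    (hb : ∀ x, b x ∈ closedBall (cw x) (rw x)) (k : Fin (m+1)) : Fc a b ≤ F (Fin.last n) k := by
  obtain ⟨σ, hσ, -, hle⟩ := hF.exists_monotone_le
    (fun i _ _ hjk => exists_dist_le_maxMinFarDist hb hjk (ha i)) (Fin.last n) k
  exact (Fc_le_matchCost a b hσ).trans (matchCost_le_iff.2 fun t => hle t (Fin.le_last t))

lemma exists_realization_forall_lt_matchCost (hru : ∀ i, 0 ≤ ru i) (hrw : ∀ x, 0 ≤ rw x)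
    {hi : Fin (n+1) → ℕ} (hmono : Monotone hi) (hlast : m < hi (Fin.last n)) {c ε : ℝ}
    (hc : ∀ i (j k : Fin (m+1)), (j : ℕ) = prevEnd hi i → j ≤ k → (k : ℕ) < hi i →
      c ≤ maxMinFarDist cw rw (cu i) (ru i) j k) (hε : 0 < ε) :
    ∃ (a : Fin (n+1) → Pt d) (b : Fin (m+1) → Pt d), (∀ i, a i ∈ closedBall (cu i) (ru i)) ∧
      (∀ x, b x ∈ closedBall (cw x) (rw x)) ∧
      ∀ σ : Fin (n+1) → Fin (m+1), Monotone σ → c - ε < matchCost a b σ := by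
  choose a ha hfar using fun i => exists_mem_closedBall_lt_ballDmax_of_Ico (hru i) (hc i) hε
  have hb : ∀ x, ∃ q ∈ closedBall (cw x) (rw x),
      ∀ i, prevEnd hi i ≤ x → (x : ℕ) < hi i → c - ε < dist (a i) q := by
    intro x
    by_cases hx : ∃ i, prevEnd hi i ≤ x ∧ (x : ℕ) < hi i
    · obtain ⟨i, h₁, h₂⟩ := hx
      obtain ⟨q, hq, hdist⟩ := exists_dist_eq_ballDmax (p := a i) (hrw x)
      refine ⟨q, hq, fun i' h₁' h₂' => ?_⟩
      obtain rfl := eq_of_mem_prevEnd_Ico hmono h₁ h₂ h₁' h₂'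
      exact hdist ▸ hfar i x h₁ h₂
    · exact ⟨cw x, mem_closedBall_self (hrw x), fun i h₁ h₂ => (hx ⟨i, h₁, h₂⟩).elim⟩
  choose b hb hbfar using hb
  refine ⟨a, b, ha, hb, fun σ hσ => ?_⟩
  obtain ⟨i, h₁, h₂⟩ := exists_prevEnd_le_lt hlast hσ
  exact (hbfar _ i h₁ h₂).trans_le (dist_le_matchCost a b σ i)

lemma exists_realization_sub_le_Fc (hru : ∀ i, 0 ≤ ru i) (hrw : ∀ x, 0 ≤ rw x)
    (hF : IsMinMaxRecurrence (fun i j k => maxMinFarDist cw rw (cu i) (ru i) j k) F)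
    {c ε : ℝ} (hc : ∀ k, c ≤ F (Fin.last n) k) (hε : 0 < ε) :
    ∃ (a : Fin (n+1) → Pt d) (b : Fin (m+1) → Pt d), (∀ i, a i ∈ closedBall (cu i) (ru i)) ∧
      (∀ x, b x ∈ closedBall (cw x) (rw x)) ∧ c - ε ≤ Fc a b := by
  obtain ⟨a, b, ha, hb, hab⟩ := exists_realization_forall_lt_matchCost hru hrw
    (hF.monotone_lowestBelow c) (lt_lowestBelow_of_forall_le hc)
    (fun _ _ _ => hF.le_of_mem_prevEnd_Ico) hε
  obtain ⟨σ, hσ, hσFc⟩ := exists_matchCost_le_Fc a b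
  exact ⟨a, b, ha, hb, (hab σ hσ).le.trans hσFc⟩

end Realization

theorem Fmax_both_imprecise_eq_recurrence_general {d n m : ℕ}
    (cu : Fin (n+1) → Pt d) (ru : Fin (n+1) → ℝ) (hru : ∀ i, 0 ≤ ru i)
    (cw : Fin (m+1) → Pt d) (rw : Fin (m+1) → ℝ) (hrw : ∀ j, 0 ≤ rw j)
    (DD : Fin (n+1) → Fin (m+1) → Fin (m+1) → ℝ)
    (hDD : ∀ i j k, DD i j k = sSup ((fun p => sInf {v : ℝ | ∃ x : Fin (m+1),
        j ≤ x ∧ x ≤ k ∧ v = ballDmax p (cw x) (rw x)}) '' closedBall (cu i) (ru i)))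
    (FF : Fin (n+1) → Fin (m+1) → ℝ)
    (hFF0 : ∀ k, FF 0 k = DD 0 0 k)
    (hFF : ∀ (i : Fin n) (k : Fin (m+1)),
      FF i.succ k = sInf {v : ℝ | ∃ j : Fin (m+1), j ≤ k ∧
        v = max (FF i.castSucc j) (DD i.succ j k)}) :
    sSup {v : ℝ | ∃ (a : Fin (n+1) → Pt d) (b : Fin (m+1) → Pt d),
        (∀ i, a i ∈ closedBall (cu i) (ru i)) ∧
        (∀ j, b j ∈ closedBall (cw j) (rw j)) ∧ v = Fc a b}
    = sInf {v : ℝ | ∃ k : Fin (m+1), v = FF (Fin.last n) k} := by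
  obtain rfl : DD = fun i j k => maxMinFarDist cw rw (cu i) (ru i) j k :=
    funext fun i => funext fun j => funext fun k => hDD i j k
  have hF : IsMinMaxRecurrence (fun i j k => maxMinFarDist cw rw (cu i) (ru i) j k) FF :=
    ⟨hFF0, hFF⟩
  set S := {v : ℝ | ∃ (a : Fin (n+1) → Pt d) (b : Fin (m+1) → Pt d),
    (∀ i, a i ∈ closedBall (cu i) (ru i)) ∧ (∀ j, b j ∈ closedBall (cw j) (rw j)) ∧ v = Fc a b}
  set c := sInf {v : ℝ | ∃ k : Fin (m+1), v = FF (Fin.last n) k}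
  have hc : ∀ k, c ≤ FF (Fin.last n) k := fun k =>
    csInf_le ((Set.finite_range (FF (Fin.last n))).subset
      (by rintro _ ⟨k, rfl⟩; exact ⟨k, rfl⟩)).bddBelow ⟨k, rfl⟩
  have hupper : ∀ v ∈ S, v ≤ c := by
    rintro _ ⟨a, b, ha, hb, rfl⟩
    exact le_csInf ⟨_, 0, rfl⟩ (by rintro _ ⟨k, rfl⟩; exact Fc_le_of_isMinMaxRecurrence hF ha hb k)
  refine le_antisymm (csSup_le ⟨_, cu, cw, fun i => mem_closedBall_self (hru i),
    fun j => mem_closedBall_self (hrw j), rfl⟩ hupper) (le_of_forall_pos_le_add fun ε hε => ?_)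
  obtain ⟨a, b, ha, hb, hab⟩ := exists_realization_sub_le_Fc hru hrw hF hc hε
  linarith [le_csSup ⟨c, hupper⟩ ⟨a, b, ha, hb, rfl⟩]

/-- for two sequences of closed balls `U` and `W`, the upper bound
`F₁^max(U,W)` (supremum of `F_c(A,B)` over realizations `A` of `U` and `B` of `W`) equals
the value of the recurrence `F(1,k) = D(1,1,k)`,
`F(i+1,k) = min_{j ≤ k} max(F(i,j), D(i+1,j,k))` at `i = n`, minimized over the last
index `k`, where `D(i,j,k) = max_{p ∈ u_i} min_{j ≤ x ≤ k} max_{q ∈ w_x} d(p,q)`. -/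
theorem Fmax_both_imprecise_eq_recurrence {d n m : ℕ} (hd : 0 < d)
    (cu : Fin (n+1) → Pt d) (ru : Fin (n+1) → ℝ) (hru : ∀ i, 0 ≤ ru i)
    (cw : Fin (m+1) → Pt d) (rw : Fin (m+1) → ℝ) (hrw : ∀ j, 0 ≤ rw j)
    (DD : Fin (n+1) → Fin (m+1) → Fin (m+1) → ℝ)
    (hDD : ∀ i j k, DD i j k = sSup ((fun p => sInf {v : ℝ | ∃ x : Fin (m+1),
        j ≤ x ∧ x ≤ k ∧ v = ballDmax p (cw x) (rw x)}) '' closedBall (cu i) (ru i)))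
    (FF : Fin (n+1) → Fin (m+1) → ℝ)
    (hFF0 : ∀ k, FF 0 k = DD 0 0 k)
    (hFF : ∀ (i : Fin n) (k : Fin (m+1)),
      FF i.succ k = sInf {v : ℝ | ∃ j : Fin (m+1), j ≤ k ∧
        v = max (FF i.castSucc j) (DD i.succ j k)}) :
    sSup {v : ℝ | ∃ (a : Fin (n+1) → Pt d) (b : Fin (m+1) → Pt d),
        (∀ i, a i ∈ closedBall (cu i) (ru i)) ∧
        (∀ j, b j ∈ closedBall (cw j) (rw j)) ∧ v = Fc a b}
    = sInf {v : ℝ | ∃ k : Fin (m+1), v = FF (Fin.last n) k} :=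
  Fmax_both_imprecise_eq_recurrence_general cu ru hru cw rw hrw DD hDD FF hFF0 hFF
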